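/- Let G be a P_5-free and bull-free graph containing an induced house: vertices v_1,...,v_5 where v_1,v_2,v_3,v_4 induce a C_4 (edges v_1v_2, v_2v_3, v_3v_4, v_4v_1) and v_5 is adjacent exactly to v_2 and v_3. Then every vertex outside the house that has a neighbor in the house and also a neighbor in the anti-neighborhood of the house is adjacent to all five vertices of the house. -/

import Mathlib

open SimpleGraph

/-- The dart: vertices a,b,c,d,e = 0,1,2,3,4; edges ab, ac, ad, bd, cd, de. -/
def dartGraph : SimpleGraph (Fin 5) :=
  SimpleGraph.fromEdgeSet {s(0,1), s(0,2), s(0,3), s(1,3), s(2,3), s(3,4)}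

/-- The bull: vertices a,b,c,d,e = 0,1,2,3,4; edges ab, bc, cd, be, ce. -/
def bullGraph : SimpleGraph (Fin 5) :=
  SimpleGraph.fromEdgeSet {s(0,1), s(1,2), s(2,3), s(1,4), s(2,4)}

/-- The house: C4 on v1..v4 = 0..3 plus v5 = 4 adjacent to v2 = 1 and v3 = 2. -/
def houseGraph : SimpleGraph (Fin 5) :=
  SimpleGraph.fromEdgeSet {s(0,1), s(1,2), s(2,3), s(3,0), s(4,1), s(4,2)}

/-- Anti-neighborhood of a vertex: all vertices distinct from and nonadjacent to `v`. -/
def vertexAnti {V : Type*} (G : SimpleGraph V) (v : V) : Set V :=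
  {u | u ≠ v ∧ ¬ G.Adj v u}

/-- Anti-neighborhood of a set `S`: vertices outside `S` with no neighbor in `S`. -/
def antiNbhd {V : Type*} (G : SimpleGraph V) (S : Set V) : Set V :=
  {v | v ∉ S ∧ ∀ u ∈ S, ¬ G.Adj v u}

/-- Contact vertices of `S`: outside `S`, with a neighbor in `S` and a neighbor in `antiNbhd G S`. -/
def contactSet {V : Type*} (G : SimpleGraph V) (S : Set V) : Set V :=
  {v | v ∉ S ∧ (∃ u ∈ S, G.Adj v u) ∧ ∃ w ∈ antiNbhd G S, G.Adj v w}

/-- `G` has a clique cutset: a clique whose removal disconnects the graph. -/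
def HasCliqueCutset {V : Type*} (G : SimpleGraph V) : Prop :=
  ∃ C : Set V, G.IsClique C ∧ ¬ (G.induce Cᶜ).Preconnected

/-- `U` is a module: no outside vertex distinguishes two vertices of `U`. -/
def IsModule {V : Type*} (G : SimpleGraph V) (U : Set V) : Prop :=
  ∀ z ∉ U, (∀ x ∈ U, G.Adj z x) ∨ (∀ x ∈ U, ¬ G.Adj z x)

/-- `G` is prime: all its modules are trivial. -/
def IsPrime {V : Type*} (G : SimpleGraph V) : Prop :=
  ∀ U : Set V, IsModule G U → U = ∅ ∨ (∃ x, U = {x}) ∨ U = Set.univ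

/-- `G` is perfect: every induced subgraph has chromatic number equal to clique number. -/
def IsPerfect {V : Type*} (G : SimpleGraph V) : Prop :=
  ∀ s : Set V, (G.induce s).chromaticNumber = ((G.induce s).cliqueNum : ℕ∞)

/-- Distance from a vertex to a set of vertices. -/
noncomputable def setDist {V : Type*} (G : SimpleGraph V) (v : V) (S : Set V) : ℕ :=
  sInf {n | ∃ u ∈ S, n = G.dist v u}

/-!
Let `w` be a neighbour of `u` with no neighbour in the house, and `S` the set of house vertices
adjacent to `u`. An induced path `x – y – z` of the house with `x ∈ S` and `y, z ∉ S` would give an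
induced `P₅` `w – u – x – y – z`; an edge `xy` inside `S` with a neighbour `z ∉ S` of `x` that is
not adjacent to `y` would give a bull on `w, u, x, y, z`. A nonempty set of house vertices closed
under these two rules is the whole house. No distinctness of the five vertices needs checking,
since in `P₅` and in the bull no two vertices have the same neighbourhood.
-/

namespace SimpleGraph

variable {W V : Type*} {H : SimpleGraph W} {G : SimpleGraph V}

instance (n : ℕ) : DecidableRel (pathGraph n).Adj := fun _ _ => decidable_of_iff' _ pathGraph_adj

instance : DecidableRel bullGraph.Adj := by unfold bullGraph; infer_instance

instance : DecidableRel houseGraph.Adj := by unfold houseGraph; infer_instance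

-- `Function.Injective H.Adj`: no two vertices of `H` have the same neighbourhood.
def Embedding.ofAdjIff (hH : Function.Injective H.Adj) (g : W → V)
    (hg : ∀ i j, G.Adj (g i) (g j) ↔ H.Adj i j) : H ↪g G where
  toFun := g
  inj' i j hij := hH <| funext fun k => propext <| by rw [← hg, ← hg, hij]
  map_rel_iff' := hg _ _

lemma injective_adj_of_forall_adj_iff (hH : ∀ i j, (∀ k, H.Adj i k ↔ H.Adj j k) → i = j) :
    Function.Injective H.Adj :=
  fun i j h => hH i j fun k => iff_of_eq (congrFun h k)

lemma injective_pathGraph_five_adj : Function.Injective (pathGraph 5).Adj :=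
  injective_adj_of_forall_adj_iff (by decide)

lemma injective_bullGraph_adj : Function.Injective bullGraph.Adj :=
  injective_adj_of_forall_adj_iff (by decide)

lemma adj_or_adj_of_isEmpty_pathGraph_five_embedding (hP5 : IsEmpty (pathGraph 5 ↪g G))
    {w u x y z : V} (hwu : G.Adj w u) (hux : G.Adj u x) (hxy : G.Adj x y) (hyz : G.Adj y z)
    (hwx : ¬ G.Adj w x) (hwy : ¬ G.Adj w y) (hwz : ¬ G.Adj w z) (hxz : ¬ G.Adj x z) :
    G.Adj u y ∨ G.Adj u z := by
  by_contra! ⟨huy, huz⟩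
  refine hP5.elim (Embedding.ofAdjIff injective_pathGraph_five_adj ![w, u, x, y, z] ?_)
  intro i j
  fin_cases i <;> fin_cases j <;> simp [pathGraph_adj, G.adj_comm, *]

lemma adj_of_isEmpty_bullGraph_embedding (hbull : IsEmpty (bullGraph ↪g G))
    {w u x y z : V} (hwu : G.Adj w u) (hux : G.Adj u x) (huy : G.Adj u y) (hxy : G.Adj x y)
    (hxz : G.Adj x z) (hyz : ¬ G.Adj y z)
    (hwx : ¬ G.Adj w x) (hwy : ¬ G.Adj w y) (hwz : ¬ G.Adj w z) :
    G.Adj u z := by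
  by_contra huz
  refine hbull.elim (Embedding.ofAdjIff injective_bullGraph_adj ![w, u, x, z, y] ?_)
  intro i j
  fin_cases i <;> fin_cases j <;> simp [bullGraph, G.adj_comm, *]

set_option synthInstance.maxSize 2048 in
lemma houseGraph_forall_of_closed (p : Fin 5 → Prop) (hp : ∃ i, p i)
    (hpath : ∀ i j k, houseGraph.Adj i j → houseGraph.Adj j k → ¬ houseGraph.Adj i k →
      p i → p j ∨ p k)
    (hbull : ∀ i j k, houseGraph.Adj i j → houseGraph.Adj i k → ¬ houseGraph.Adj j k →
      p i → p j → p k) :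
    ∀ i, p i := by
  classical
  obtain ⟨i₀, hi₀⟩ := hp
  have key : ∀ S : Finset (Fin 5), S.Nonempty →
      (∀ i j k, houseGraph.Adj i j → houseGraph.Adj j k → ¬ houseGraph.Adj i k →
        i ∈ S → j ∈ S ∨ k ∈ S) →
      (∀ i j k, houseGraph.Adj i j → houseGraph.Adj i k → ¬ houseGraph.Adj j k →
        i ∈ S → j ∈ S → k ∈ S) →
      S = Finset.univ := by
    -- By hand: from a vertex of `S` the induced `P₃`s of the house force an edge inside `S`, and
    -- from an edge the second rule spreads `S` over the whole house.
    decide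
  simpa [Finset.eq_univ_iff_forall] using
    key {i | p i} ⟨i₀, by simpa⟩ (by simpa using hpath) (by simpa using hbull)

end SimpleGraph

theorem stmt13_general {V : Type*} (G : SimpleGraph V)
    (hP5 : IsEmpty (pathGraph 5 ↪g G))
    (hbull : IsEmpty (bullGraph ↪g G))
    (f : houseGraph ↪g G)
    (u : V) (hu : u ∈ contactSet G (Set.range f)) :
    ∀ i : Fin 5, G.Adj u (f i) := by
  obtain ⟨-, ⟨_, ⟨i₀, rfl⟩, hui₀⟩, w, ⟨-, hw⟩, huw⟩ := hu
  have hwf (i : Fin 5) : ¬ G.Adj w (f i) := hw _ ⟨i, rfl⟩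
  refine houseGraph_forall_of_closed (fun i => G.Adj u (f i)) ⟨i₀, hui₀⟩ ?_ ?_
  · intro i j k hij hjk hik hui
    exact adj_or_adj_of_isEmpty_pathGraph_five_embedding hP5 huw.symm hui (f.map_adj_iff.2 hij)
      (f.map_adj_iff.2 hjk) (hwf i) (hwf j) (hwf k) (mt f.map_adj_iff.1 hik)
  · intro i j k hij hik hjk hui huj
    exact adj_of_isEmpty_bullGraph_embedding hbull huw.symm hui huj (f.map_adj_iff.2 hij)
      (f.map_adj_iff.2 hik) (mt f.map_adj_iff.1 hjk) (hwf i) (hwf j) (hwf k)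

theorem stmt13 {V : Type*} [Fintype V] (G : SimpleGraph V)
    (hP5 : IsEmpty (pathGraph 5 ↪g G))
    (hbull : IsEmpty (bullGraph ↪g G))
    (f : houseGraph ↪g G)
    (u : V) (hu : u ∈ contactSet G (Set.range f)) :
    ∀ i : Fin 5, G.Adj u (f i) :=
  stmt13_general G hP5 hbull f u hu
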